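/- Given a program P = ⟨Σ, C, R⟩ where C is strongly regular and well-typed, the term model M_P(V) is a PT-algebra. Moreover, if all rules in R are regular and well-typed, then M_P(V) is a well-typed PT-algebra. -/

import Mathlib

namespace ACRWL

/-- Partial expressions: data variables, bottom, data constructor applications
and defined function applications (symbols named by natural numbers). -/
inductive Expr : Type where
  | var : ℕ → Expr
  | bot : Expr
  | con : ℕ → List Expr → Expr
  | fn  : ℕ → List Expr → Expr

namespace Expr

/-- Occurrence of a data variable in an expression. -/
inductive Occurs (x : ℕ) : Expr → Prop where
  | var : Occurs x (var x)
  | con {c : ℕ} {es : List Expr} {e : Expr} : e ∈ es → Occurs x e → Occurs x (con c es)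
  | fn {f : ℕ} {es : List Expr} {e : Expr} : e ∈ es → Occurs x e → Occurs x (fn f es)

/-- Partial data terms: built from variables, ⊥ and data constructors only. -/
inductive IsTerm : Expr → Prop where
  | var (x : ℕ) : IsTerm (var x)
  | bot : IsTerm bot
  | con {c : ℕ} {es : List Expr} : (∀ e ∈ es, IsTerm e) → IsTerm (con c es)

/-- Total expressions: no occurrence of ⊥. -/
inductive NoBot : Expr → Prop where
  | var (x : ℕ) : NoBot (var x)
  | con {c : ℕ} {es : List Expr} : (∀ e ∈ es, NoBot e) → NoBot (con c es)
  | fn {f : ℕ} {es : List Expr} : (∀ e ∈ es, NoBot e) → NoBot (fn f es)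

/-- Total data terms. -/
def IsTotalTerm (e : Expr) : Prop := IsTerm e ∧ NoBot e

/-- Application of a data substitution. -/
def subst (σ : ℕ → Expr) : Expr → Expr
  | var x => σ x
  | bot => bot
  | con c es => con c (es.attach.map fun e => subst σ e.1)
  | fn f es => fn f (es.attach.map fun e => subst σ e.1)
termination_by e => sizeOf e
decreasing_by
  all_goals (simp only [Expr.con.sizeOf_spec, Expr.fn.sizeOf_spec]; have := List.sizeOf_lt_of_mem e.2; omega)

/-- Number of occurrences of the variable `x`. -/
def varCount (x : ℕ) : Expr → ℕ
  | var y => if y = x then 1 else 0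
  | bot => 0
  | con _ es => (es.attach.map fun e => varCount x e.1).sum
  | fn _ es => (es.attach.map fun e => varCount x e.1).sum
termination_by e => sizeOf e
decreasing_by
  all_goals (simp only [Expr.con.sizeOf_spec, Expr.fn.sizeOf_spec]; have := List.sizeOf_lt_of_mem e.2; omega)

end Expr

/-- A set of equational axioms between (total data) terms. -/
abbrev Axioms := Set (Expr × Expr)

/-- A data substitution mapping every variable to a partial data term. -/
def TermSub (σ : ℕ → Expr) : Prop := ∀ x, (σ x).IsTerm

/-- `σ` is safe for `t`: variables occurring more than once in `t`
are mapped to total data terms. -/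
def SafeSub (σ : ℕ → Expr) (t : Expr) : Prop :=
  ∀ x, 2 ≤ Expr.varCount x t → Expr.IsTotalTerm (σ x)

/-- Well-formed set of equational axioms: a finite set of equations between
total data terms. -/
def WfAxioms (C : Axioms) : Prop :=
  C.Finite ∧ ∀ p ∈ C, Expr.IsTotalTerm p.1 ∧ Expr.IsTotalTerm p.2

/-- `[C]_⊒` : the instances of the axioms of `C`, read in both directions,
under safe partial data substitutions. -/
def CInstances (C : Axioms) : Set (Expr × Expr) :=
  { q | ∃ p ∈ C, ∃ σ : ℕ → Expr, TermSub σ ∧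
      ((SafeSub σ p.1 ∧ q = (p.1.subst σ, p.2.subst σ)) ∨
       (SafeSub σ p.2 ∧ q = (p.2.subst σ, p.1.subst σ))) }

/-- Every axiom is regular : both sides have the same data variables. -/
def RegularAxioms (C : Axioms) : Prop :=
  ∀ p ∈ C, ∀ x, Expr.Occurs x p.1 ↔ Expr.Occurs x p.2

/-- Every axiom is non-collapsing : neither side is a variable. -/
def NonCollapsing (C : Axioms) : Prop :=
  ∀ p ∈ C, (∀ x, p.1 ≠ Expr.var x) ∧ (∀ x, p.2 ≠ Expr.var x)

/-- Strongly regular set of axioms. -/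
def StronglyRegular (C : Axioms) : Prop := RegularAxioms C ∧ NonCollapsing C

/-- The inequational calculus associated to `C`, deriving approximation
inequalities `s ⊒ t` between partial data terms. -/
inductive Geq (C : Axioms) : Expr → Expr → Prop where
  | bot {t : Expr} : t.IsTerm → Geq C t Expr.bot
  | refl {t : Expr} : t.IsTerm → Geq C t t
  | trans {t t' t'' : Expr} : Geq C t t' → Geq C t' t'' → Geq C t t''
  | mono {c : ℕ} {ts ss : List Expr} : ts.length = ss.length →
      (∀ p ∈ ts.zip ss, Geq C p.1 p.2) → Geq C (Expr.con c ts) (Expr.con c ss)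
  | ax {s t : Expr} : (s, t) ∈ CInstances C → Geq C s t

/-- `s ≈_C t` iff `s ⊒_C t` and `t ⊒_C s`. -/
def EqC (C : Axioms) (s t : Expr) : Prop := Geq C s t ∧ Geq C t s

end ACRWL

namespace ACRWL

/-- A defining rule `f(t₁,…,tₙ) → r ⇐ a₁ == b₁, …, a_m == b_m`. -/
structure Rule : Type where
  fname : ℕ
  lhs : List Expr
  rhs : Expr
  conds : List (Expr × Expr)

/-- Application of a data substitution to a defining rule. -/
def Rule.subst (σ : ℕ → Expr) (ρ : Rule) : Rule :=
  ⟨ρ.fname, ρ.lhs.map (Expr.subst σ), ρ.rhs.subst σ,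
    ρ.conds.map fun p => (p.1.subst σ, p.2.subst σ)⟩

/-- A linear tuple of terms: no variable occurs more than once in the tuple. -/
def Linear (ts : List Expr) : Prop := ∀ x : ℕ, (ts.map (Expr.varCount x)).sum ≤ 1

/-- Well-formed defining rule: linear left-hand side made of total data
terms; total right-hand side and conditions. -/
def WfRule (ρ : Rule) : Prop :=
  Linear ρ.lhs ∧ (∀ t ∈ ρ.lhs, Expr.IsTotalTerm t) ∧ ρ.rhs.NoBot ∧
  ∀ p ∈ ρ.conds, p.1.NoBot ∧ p.2.NoBot

/-- A program: a finite set of equational axioms for constructors together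
with a finite set of defining rules for functions. -/
structure Program : Type where
  C : Axioms
  R : Set Rule
  wfC : WfAxioms C
  finR : R.Finite
  wfR : ∀ ρ ∈ R, WfRule ρ

/-- `[R]_→` : all instances of rules of the program under
partial data substitutions. -/
def RInstances (P : Program) : Set Rule :=
  { ρ' | ∃ ρ ∈ P.R, ∃ σ : ℕ → Expr, TermSub σ ∧ ρ' = ρ.subst σ }

/-- Statements derived by the rewriting calculi: reduction/approximation
statements `e → e'` and joinability statements `e == e'`. -/
inductive Stm : Type where
  | red : Expr → Expr → Stm
  | join : Expr → Expr → Stm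

/-- The Basic Rewriting Calculus (BRC) of a program. -/
inductive BRC (P : Program) : Stm → Prop where
  | bot (e : Expr) : BRC P (Stm.red e Expr.bot)
  | refl (e : Expr) : BRC P (Stm.red e e)
  | trans {e e' e'' : Expr} :
      BRC P (Stm.red e e') → BRC P (Stm.red e' e'') → BRC P (Stm.red e e'')
  | monoCon {c : ℕ} {es es' : List Expr} : es.length = es'.length →
      (∀ p ∈ es.zip es', BRC P (Stm.red p.1 p.2)) →
      BRC P (Stm.red (Expr.con c es) (Expr.con c es'))
  | monoFn {f : ℕ} {es es' : List Expr} : es.length = es'.length →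
      (∀ p ∈ es.zip es', BRC P (Stm.red p.1 p.2)) →
      BRC P (Stm.red (Expr.fn f es) (Expr.fn f es'))
  | rule {ρ : Rule} : ρ ∈ RInstances P →
      (∀ p ∈ ρ.conds, BRC P (Stm.join p.1 p.2)) →
      BRC P (Stm.red (Expr.fn ρ.fname ρ.lhs) ρ.rhs)
  | mut {s t : Expr} : (s, t) ∈ CInstances P.C → BRC P (Stm.red s t)
  | join {e e' t : Expr} : t.IsTotalTerm →
      BRC P (Stm.red e t) → BRC P (Stm.red e' t) → BRC P (Stm.join e e')

/-- The Goal-Oriented Rewriting Calculus (GORC) of a program. -/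
inductive GORC (P : Program) : Stm → Prop where
  | bot (e : Expr) : GORC P (Stm.red e Expr.bot)
  | rrefl (x : ℕ) : GORC P (Stm.red (Expr.var x) (Expr.var x))
  | dc {c : ℕ} {es ts : List Expr} : es.length = ts.length →
      (∀ p ∈ es.zip ts, GORC P (Stm.red p.1 p.2)) →
      GORC P (Stm.red (Expr.con c es) (Expr.con c ts))
  | omut {c : ℕ} {es ts : List Expr} {s t : Expr} : t ≠ Expr.bot →
      (Expr.con c ts, s) ∈ CInstances P.C → es.length = ts.length →
      (∀ p ∈ es.zip ts, GORC P (Stm.red p.1 p.2)) →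
      GORC P (Stm.red s t) → GORC P (Stm.red (Expr.con c es) t)
  | orule {es : List Expr} {ρ : Rule} {t : Expr} : t ≠ Expr.bot →
      ρ ∈ RInstances P → es.length = ρ.lhs.length →
      (∀ p ∈ es.zip ρ.lhs, GORC P (Stm.red p.1 p.2)) →
      (∀ p ∈ ρ.conds, GORC P (Stm.join p.1 p.2)) →
      GORC P (Stm.red ρ.rhs t) → GORC P (Stm.red (Expr.fn ρ.fname es) t)
  | join {e e' t : Expr} : t.IsTotalTerm →
      GORC P (Stm.red e t) → GORC P (Stm.red e' t) → GORC P (Stm.join e e')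

end ACRWL

namespace ACRWL

/-- Polymorphic types built from type variables and type constructors. -/
inductive Ty : Type where
  | tvar : ℕ → Ty
  | tcon : ℕ → List Ty → Ty

namespace Ty

/-- Occurrence of a type variable in a type. -/
inductive OccursT (α : ℕ) : Ty → Prop where
  | tvar : OccursT α (tvar α)
  | tcon {K : ℕ} {τs : List Ty} {τ : Ty} : τ ∈ τs → OccursT α τ → OccursT α (tcon K τs)

/-- Application of a type substitution. -/
def subst (σ : ℕ → Ty) : Ty → Ty
  | tvar α => σ α
  | tcon K τs => tcon K (τs.attach.map fun τ => subst σ τ.1)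
termination_by τ => sizeOf τ
decreasing_by
  all_goals (simp only [Ty.tcon.sizeOf_spec]; have := List.sizeOf_lt_of_mem τ.2; omega)

end Ty

/-- A principal type declaration `(τ₁,…,τₙ) → τ`. -/
structure Decl : Type where
  args : List Ty
  res : Ty

/-- Transparency: every type variable of the argument types occurs in the
result type. -/
def Decl.Transparent (d : Decl) : Prop :=
  ∀ α : ℕ, (∃ τ ∈ d.args, Ty.OccursT α τ) → Ty.OccursT α d.res

/-- Instance of a declaration under a type substitution. -/
def Decl.substT (σt : ℕ → Ty) (d : Decl) : Decl :=
  ⟨d.args.map (Ty.subst σt), d.res.subst σt⟩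

/-- A variant of a declaration: a renaming of its type variables. -/
def IsVariant (d d' : Decl) : Prop :=
  ∃ ρ : ℕ → ℕ, Function.Injective ρ ∧ d' = d.substT (fun α => Ty.tvar (ρ α))

/-- A polymorphic signature: (optional) principal type declarations for data
constructors and for defined function symbols, the former transparent. -/
structure Signature : Type where
  dc : ℕ → Option Decl
  fs : ℕ → Option Decl
  dc_trans : ∀ c d, dc c = some d → Decl.Transparent d

/-- An environment: at most one type annotation per data variable. -/
abbrev Env := ℕ → Option Ty

/-- Instance of an environment under a type substitution. -/
def Env.substT (V : Env) (σt : ℕ → Ty) : Env := fun x => (V x).map (Ty.subst σt)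

/-- The type inference system: `HasType Sg V e τ` is the judgement
`V ⊢_{Σ⊥} e : τ`.  The symbol `⊥` has principal type `⊥ : → α`, hence
every type is an admissible instance for it. -/
inductive HasType (Sg : Signature) (V : Env) : Expr → Ty → Prop where
  | var {x : ℕ} {τ : Ty} : V x = some τ → HasType Sg V (Expr.var x) τ
  | bot (τ : Ty) : HasType Sg V Expr.bot τ
  | con {c : ℕ} {es : List Expr} {d : Decl} {σt : ℕ → Ty} :
      Sg.dc c = some d → es.length = d.args.length →
      (∀ p ∈ es.zip d.args, HasType Sg V p.1 (Ty.subst σt p.2)) →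
      HasType Sg V (Expr.con c es) (Ty.subst σt d.res)
  | fn {f : ℕ} {es : List Expr} {d : Decl} {σt : ℕ → Ty} :
      Sg.fs f = some d → es.length = d.args.length →
      (∀ p ∈ es.zip d.args, HasType Sg V p.1 (Ty.subst σt p.2)) →
      HasType Sg V (Expr.fn f es) (Ty.subst σt d.res)

/-- Occurrence of a function symbol in an expression. -/
inductive FnOccurs (f : ℕ) : Expr → Prop where
  | head {es : List Expr} : FnOccurs f (Expr.fn f es)
  | con {c : ℕ} {es : List Expr} {e : Expr} : e ∈ es → FnOccurs f e → FnOccurs f (Expr.con c es)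
  | fn {g : ℕ} {es : List Expr} {e : Expr} : e ∈ es → FnOccurs f e → FnOccurs f (Expr.fn g es)

end ACRWL

namespace ACRWL

/-- A regular defining rule: every variable of the right-hand side occurs in
the left-hand side. -/
def RegularRule (ρ : Rule) : Prop :=
  ∀ x : ℕ, Expr.Occurs x ρ.rhs → ∃ t ∈ ρ.lhs, Expr.Occurs x t

/-- A well-typed (regular) defining rule for `f : (τ₁,…,τₙ) → τ`: in some
environment the left-hand side arguments have the declared argument types,
the right-hand side has the declared result type, and the two sides of every
condition share a type. -/
def WellTypedRule (Sg : Signature) (ρ : Rule) : Prop :=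
  ∃ d : Decl, Sg.fs ρ.fname = some d ∧ ρ.lhs.length = d.args.length ∧
    ∃ V : Env,
      (∀ p ∈ ρ.lhs.zip d.args, HasType Sg V p.1 p.2) ∧
      HasType Sg V ρ.rhs d.res ∧
      ∀ p ∈ ρ.conds, ∃ τ : Ty, HasType Sg V p.1 τ ∧ HasType Sg V p.2 τ

/-- A well-typed strongly regular equational axiom
`c(t₁,…,tₙ) ≈ d(s₁,…,s_m)`: the principal types of `c` and `d` admit
variants with a common result type `τ` such that both sides have type `τ`
in some environment. -/
def WellTypedAxiom (Sg : Signature) (p : Expr × Expr) : Prop :=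
  ∃ (c : ℕ) (ts : List Expr) (d : ℕ) (ss : List Expr)
      (τs τs' : List Ty) (τ : Ty),
    p.1 = Expr.con c ts ∧ p.2 = Expr.con d ss ∧
    (∃ D, Sg.dc c = some D ∧ IsVariant D ⟨τs, τ⟩) ∧
    (∃ D, Sg.dc d = some D ∧ IsVariant D ⟨τs', τ⟩) ∧
    ∃ V : Env, HasType Sg V p.1 τ ∧ HasType Sg V p.2 τ

/-- A well-typed strongly regular program. -/
def WellTypedProgram (Sg : Signature) (P : Program) : Prop :=
  StronglyRegular P.C ∧
  (∀ p ∈ P.C, WellTypedAxiom Sg p) ∧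
  (∀ ρ ∈ P.R, RegularRule ρ ∧ WellTypedRule Sg ρ)

end ACRWL

namespace ACRWL

/-- Expression whose data variables all belong to the environment `V`
(i.e. to the set `X` of variables of `V`). -/
def ExprOver (V : Env) (e : Expr) : Prop := ∀ x, Expr.Occurs x e → (V x).isSome

/-- Partial data term over the variables of `V`: an element (representative)
of the data universe of the term model `M_P(V)`. -/
def TermOver (V : Env) (t : Expr) : Prop := t.IsTerm ∧ ExprOver V t

/-- `[t]` is a maximal (totally defined) element of the data universe of the
term model. -/
def MaxClass (P : Program) (V : Env) (t : Expr) : Prop :=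
  ∀ s, TermOver V s → Geq P.C s t → Geq P.C t s

/-- Denotation in the term model `M_P(V)` under the data valuation
represented by the substitution `σd`:  `MDen P σd e t` means
`[t] ∈ ⟦e⟧^{M_P(V)}[σd]`. -/
inductive MDen (P : Program) (σd : ℕ → Expr) : Expr → Expr → Prop where
  | bot {t : Expr} : EqC P.C t Expr.bot → MDen P σd Expr.bot t
  | var {x : ℕ} {t : Expr} : Geq P.C (σd x) t → MDen P σd (Expr.var x) t
  | con {c : ℕ} {es ts : List Expr} {t : Expr} : es.length = ts.length →
      (∀ p ∈ es.zip ts, MDen P σd p.1 p.2) →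
      Geq P.C (Expr.con c ts) t → MDen P σd (Expr.con c es) t
  | fn {f : ℕ} {es ts : List Expr} {t t' : Expr} : es.length = ts.length →
      (∀ p ∈ es.zip ts, MDen P σd p.1 p.2) →
      GORC P (Stm.red (Expr.fn f ts) t') → EqC P.C t t' →
      MDen P σd (Expr.fn f es) t

/-- The term model satisfies `a == b` under the valuation `[σd]`. -/
def MJoinSat (P : Program) (V : Env) (σd : ℕ → Expr) (a b : Expr) : Prop :=
  ∃ s, TermOver V s ∧ MaxClass P V s ∧ MDen P σd a s ∧ MDen P σd b s

/-- The term model satisfies `e → e'` under the valuation `[σd]`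
(denotation inclusion). -/
def MRedSat (P : Program) (σd : ℕ → Expr) (e e' : Expr) : Prop :=
  ∀ s, MDen P σd e' s → MDen P σd e s

/-- The valuation `[σd]` over the term model is safe for `t`. -/
def MSafeVal (P : Program) (V : Env) (σd : ℕ → Expr) (t : Expr) : Prop :=
  ∀ x, 2 ≤ Expr.varCount x t → MaxClass P V (σd x)

/-- A substitution representing a data valuation over the term model. -/
def MValuation (V : Env) (σd : ℕ → Expr) : Prop :=
  TermSub σd ∧ ∀ x, TermOver V (σd x)

/-- The term model satisfies a defining rule. -/
def MSatRule (P : Program) (V : Env) (ρ : Rule) : Prop :=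
  ∀ σd, MValuation V σd → (∀ p ∈ ρ.conds, MJoinSat P V σd p.1 p.2) →
    MRedSat P σd (Expr.fn ρ.fname ρ.lhs) ρ.rhs

/-- The term model satisfies an equational axiom. -/
def MSatAxiom (P : Program) (V : Env) (p : Expr × Expr) : Prop :=
  ∀ σd, MValuation V σd →
    (MSafeVal P V σd p.1 → MRedSat P σd p.1 p.2) ∧
    (MSafeVal P V σd p.2 → MRedSat P σd p.2 p.1)

/-- The term model `M_P(V)` is a model of `P`. -/
def MModels (P : Program) (V : Env) : Prop :=
  (∀ ρ ∈ P.R, MSatRule P V ρ) ∧ (∀ p ∈ P.C, MSatAxiom P V p)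

end ACRWL


/-! Strong regularity makes `⊒_C` compatible with the structure of terms: every axiom instance
relates two constructor terms with the same variables, so `⊒_C` neither creates nor destroys
`⊥`, a class is maximal exactly when it contains a total term, and lowering the target or raising
the source of a GORC derivation only requires rebuilding its `DC` and `OMUT` steps.
For the typing part, transparency of the constructors lets the type of an instance `c(t̄)σ`
determine the types of the substituted variables; these then type the other side of an axiom
(which has the same variables) and the right-hand side of a regular rule, so types are preserved
along `⊒_C` and along GORC derivations. -/
namespace List

variable {α β γ : Type*} {R : α → β → Prop}

theorem forall₂_iff_length_eq_and_forall_mem_zip {l₁ : List α} {l₂ : List β} :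
    Forall₂ R l₁ l₂ ↔ l₁.length = l₂.length ∧ ∀ p ∈ l₁.zip l₂, R p.1 p.2 := by
  simp only [forall₂_iff_zip, Prod.forall]

theorem Forall₂.comp {S : β → γ → Prop} {T : α → γ → Prop} :
    ∀ {l₁ l₂ l₃}, Forall₂ R l₁ l₂ → Forall₂ S l₂ l₃ → (∀ a b c, R a b → S b c → T a c) →
      Forall₂ T l₁ l₃
  | _, _, _, .nil, .nil, _ => .nil
  | _, _, _, .cons hab h₁, .cons hbc h₂, H => .cons (H _ _ _ hab hbc) (h₁.comp h₂ H)

theorem Forall₂.exists_of_mem_left {a : α} :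
    ∀ {l₁ l₂}, Forall₂ R l₁ l₂ → a ∈ l₁ → ∃ b ∈ l₂, R a b
  | _, _, .cons hab h, ha => by
    rcases mem_cons.1 ha with rfl | ha
    · exact ⟨_, mem_cons_self, hab⟩
    · obtain ⟨b, hb, hr⟩ := h.exists_of_mem_left ha
      exact ⟨b, mem_cons_of_mem _ hb, hr⟩

end List

namespace ACRWL

namespace Ty

@[elab_as_elim, induction_eliminator]
theorem induction {motive : Ty → Prop} (tvar : ∀ α, motive (.tvar α))
    (tcon : ∀ K τs, (∀ τ ∈ τs, motive τ) → motive (.tcon K τs)) : ∀ τ, motive τ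
  | .tvar α => tvar α
  | .tcon K τs => tcon K τs fun τ _ => induction tvar tcon τ

@[simp] theorem subst_tvar (σ : ℕ → Ty) (α : ℕ) : subst σ (tvar α) = σ α := by rw [subst]

@[simp] theorem subst_tcon (σ : ℕ → Ty) (K : ℕ) (τs : List Ty) :
    subst σ (tcon K τs) = tcon K (τs.map (subst σ)) := by
  rw [subst]; simp

theorem subst_subst (θ η : ℕ → Ty) (τ : Ty) :
    (τ.subst η).subst θ = τ.subst fun α => (η α).subst θ := by
  induction τ with
  | tvar α => simp
  | tcon K τs ih => simpa using List.map_congr_left ih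

theorem subst_congr {θ η : ℕ → Ty} {τ : Ty} (h : ∀ α, OccursT α τ → θ α = η α) :
    τ.subst θ = τ.subst η := by
  induction τ with
  | tvar α => simpa using h α .tvar
  | tcon K τs ih =>
    simpa using List.map_congr_left fun τ hτ => ih τ hτ fun α hα => h α (.tcon hτ hα)

theorem eq_of_subst_eq {θ η : ℕ → Ty} {τ : Ty} {α : ℕ} (h : τ.subst θ = τ.subst η)
    (hα : OccursT α τ) : θ α = η α := by
  induction hα with
  | tvar => simpa using h
  | tcon hτ _ ih => simp only [subst_tcon, tcon.injEq, List.map_inj_left] at h; exact ih (h.2 _ hτ)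

end Ty

theorem Decl.Transparent.subst_args_eq {D : Decl} (hD : D.Transparent) {θ η : ℕ → Ty}
    (h : D.res.subst θ = D.res.subst η) {τ : Ty} (hτ : τ ∈ D.args) : τ.subst θ = τ.subst η :=
  Ty.subst_congr fun α hα => Ty.eq_of_subst_eq h (hD α ⟨τ, hτ, hα⟩)

theorem IsVariant.exists_subst_res {D D' : Decl} (h : IsVariant D D') (η : ℕ → Ty) :
    ∃ θ, D.res.subst η = D'.res.subst θ := by
  obtain ⟨ρ, hρ, rfl⟩ := h
  exact ⟨Function.extend ρ η Ty.tvar, by simp [Decl.substT, Ty.subst_subst, hρ.extend_apply]⟩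

namespace Expr

@[elab_as_elim, induction_eliminator]
theorem induction {motive : Expr → Prop} (var : ∀ x, motive (.var x)) (bot : motive .bot)
    (con : ∀ c es, (∀ e ∈ es, motive e) → motive (.con c es))
    (fn : ∀ f es, (∀ e ∈ es, motive e) → motive (.fn f es)) : ∀ e, motive e
  | .var x => var x
  | .bot => bot
  | .con c es => con c es fun e _ => induction var bot con fn e
  | .fn f es => fn f es fun e _ => induction var bot con fn e

section Subst

variable (σ : ℕ → Expr)

@[simp] theorem subst_var (x : ℕ) : subst σ (var x) = σ x := by rw [subst]

@[simp] theorem subst_bot : subst σ bot = bot := by rw [subst]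

@[simp] theorem subst_con (c : ℕ) (es : List Expr) :
    subst σ (con c es) = con c (es.map (subst σ)) := by
  rw [subst]; simp

@[simp] theorem subst_fn (f : ℕ) (es : List Expr) :
    subst σ (fn f es) = fn f (es.map (subst σ)) := by
  rw [subst]; simp

end Subst

@[simp] theorem varCount_var (x y : ℕ) : varCount x (var y) = if y = x then 1 else 0 := by
  rw [varCount]

@[simp] theorem varCount_bot (x : ℕ) : varCount x bot = 0 := by rw [varCount]

@[simp] theorem varCount_con (x c : ℕ) (es : List Expr) :
    varCount x (con c es) = (es.map (varCount x)).sum := by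
  rw [varCount]; simp

@[simp] theorem varCount_fn (x f : ℕ) (es : List Expr) :
    varCount x (fn f es) = (es.map (varCount x)).sum := by
  rw [varCount]; simp

theorem occurs_of_varCount_pos {x : ℕ} {e : Expr} (h : 0 < varCount x e) : Occurs x e := by
  induction e with
  | var y =>
    obtain rfl : y = x := by by_contra hy; simp [hy] at h
    exact .var
  | bot => simp at h
  | con c es ih =>
    obtain ⟨e, he, hpos⟩ : ∃ e ∈ es, 0 < varCount x e := by
      simpa [List.sum_pos_iff_exists_pos_nat] using h
    exact .con he (ih e he hpos)
  | fn f es ih =>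
    obtain ⟨e, he, hpos⟩ : ∃ e ∈ es, 0 < varCount x e := by
      simpa [List.sum_pos_iff_exists_pos_nat] using h
    exact .fn he (ih e he hpos)

theorem IsTerm.subst {σ : ℕ → Expr} (hσ : TermSub σ) {t : Expr} (ht : t.IsTerm) :
    (t.subst σ).IsTerm := by
  induction ht with
  | var x => simpa using hσ x
  | bot => simpa using IsTerm.bot
  | con _ ih => simpa using IsTerm.con (List.forall_mem_map.2 ih)

theorem NoBot.subst {σ : ℕ → Expr} {e : Expr} (he : e.NoBot)
    (hσ : ∀ x, Occurs x e → (σ x).NoBot) : (e.subst σ).NoBot := by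
  induction he with
  | var x => simpa using hσ x .var
  | con _ ih =>
    simpa using NoBot.con (List.forall_mem_map.2 fun e he => ih e he fun x hx => hσ x (.con he hx))
  | fn _ ih =>
    simpa using NoBot.fn (List.forall_mem_map.2 fun e he => ih e he fun x hx => hσ x (.fn he hx))

theorem NoBot.of_subst {σ : ℕ → Expr} {e : Expr} {x : ℕ} (h : (e.subst σ).NoBot)
    (hx : Occurs x e) : (σ x).NoBot := by
  induction hx with
  | var => simpa using h
  | con he _ ih =>
    simp only [subst_con] at h
    cases h with | con h => exact ih (h _ (List.mem_map_of_mem he))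
  | fn he _ ih =>
    simp only [subst_fn] at h
    cases h with | fn h => exact ih (h _ (List.mem_map_of_mem he))

theorem IsTotalTerm.exists_eq_con {t : Expr} (ht : t.IsTotalTerm) (hvar : ∀ x, t ≠ var x) :
    ∃ c ts, t = con c ts := by
  obtain ⟨ht, hnb⟩ := ht
  cases ht with
  | var x => exact absurd rfl (hvar x)
  | bot => cases hnb
  | con => exact ⟨_, _, rfl⟩

/-- Any closed total term would do in place of `con 0 []`. -/
@[simp] def fillBot : Expr → Expr
  | var x => var x
  | bot => con 0 []
  | con c es => con c (es.map fillBot)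
  | fn f es => fn f (es.map fillBot)

theorem noBot_fillBot (e : Expr) : e.fillBot.NoBot := by
  induction e with
  | var x => simpa using NoBot.var x
  | bot => simpa using NoBot.con (c := 0) (es := []) (by simp)
  | con c es ih => simpa using NoBot.con (List.forall_mem_map.2 ih)
  | fn f es ih => simpa using NoBot.fn (List.forall_mem_map.2 ih)

theorem IsTerm.fillBot {t : Expr} (ht : t.IsTerm) : t.fillBot.IsTerm := by
  induction ht with
  | var x => simpa using IsTerm.var x
  | bot => simpa using IsTerm.con (c := 0) (es := []) (by simp)
  | con _ ih => simpa using IsTerm.con (List.forall_mem_map.2 ih)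

theorem occurs_of_occurs_fillBot {x : ℕ} {e : Expr} (h : Occurs x e.fillBot) : Occurs x e := by
  induction e with
  | var y => simpa using h
  | bot => rw [fillBot] at h; cases h with | con he _ => simp at he
  | con c es ih =>
    rw [fillBot] at h
    cases h with
    | con he' hx =>
      obtain ⟨e, he, rfl⟩ := List.mem_map.1 he'
      exact .con he (ih e he hx)
  | fn f es ih =>
    rw [fillBot] at h
    cases h with
    | fn he' hx =>
      obtain ⟨e, he, rfl⟩ := List.mem_map.1 he'
      exact .fn he (ih e he hx)

end Expr

theorem safeSub_of_noBot_subst {σ : ℕ → Expr} (hσ : TermSub σ) {e : Expr}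
    (h : (e.subst σ).NoBot) : SafeSub σ e :=
  fun _ hx => ⟨hσ _, h.of_subst (Expr.occurs_of_varCount_pos (by omega))⟩

section Geq

variable {P : Program}

theorem isTerm_con_of_mem_cInstances (hnc : NonCollapsing P.C) {q : Expr × Expr}
    (hq : q ∈ CInstances P.C) :
    (q.1.IsTerm ∧ ∃ c ts, q.1 = .con c ts) ∧ (q.2.IsTerm ∧ ∃ c ts, q.2 = .con c ts) := by
  obtain ⟨p, hp, σ, hσ, hq⟩ := hq
  have side : ∀ t : Expr, t.IsTotalTerm → (∀ x, t ≠ .var x) →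
      (t.subst σ).IsTerm ∧ ∃ c ts, t.subst σ = .con c ts := by
    intro t ht hvar
    obtain ⟨c, ts, rfl⟩ := ht.exists_eq_con hvar
    exact ⟨ht.1.subst hσ, c, _, Expr.subst_con ..⟩
  have h₁ := side _ (P.wfC.2 p hp).1 (hnc p hp).1
  have h₂ := side _ (P.wfC.2 p hp).2 (hnc p hp).2
  rcases hq with ⟨-, rfl⟩ | ⟨-, rfl⟩
  exacts [⟨h₁, h₂⟩, ⟨h₂, h₁⟩]

theorem Geq.con_of_forall₂ {C : Axioms} {c : ℕ} {ts ss : List Expr}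
    (h : List.Forall₂ (Geq C) ts ss) : Geq C (.con c ts) (.con c ss) :=
  .mono h.length_eq (List.forall₂_iff_length_eq_and_forall_mem_zip.1 h).2

theorem Geq.noBot (hreg : RegularAxioms P.C) {s t : Expr} (h : Geq P.C s t) (ht : t.NoBot) :
    s.NoBot := by
  induction h with
  | bot => cases ht
  | refl => exact ht
  | trans _ _ ih₁ ih₂ => exact ih₁ (ih₂ ht)
  | mono hlen _ ih =>
    cases ht with
    | con ht =>
      refine .con fun e he => ?_
      have hih : List.Forall₂ (fun a b : Expr => b.NoBot → a.NoBot) _ _ :=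
        List.forall₂_iff_length_eq_and_forall_mem_zip.2 ⟨hlen, ih⟩
      obtain ⟨s, hs, hes⟩ := hih.exists_of_mem_left he
      exact hes (ht s hs)
  | ax hq =>
    obtain ⟨p, hp, σ, -, ⟨-, hq⟩ | ⟨-, hq⟩⟩ := hq <;> obtain ⟨rfl, rfl⟩ := Prod.mk.inj hq
    · exact (P.wfC.2 p hp).1.2.subst fun x hx => ht.of_subst ((hreg p hp x).1 hx)
    · exact (P.wfC.2 p hp).2.2.subst fun x hx => ht.of_subst ((hreg p hp x).2 hx)

theorem Geq.symm_of_noBot (hreg : RegularAxioms P.C) {s t : Expr} (h : Geq P.C s t)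
    (ht : t.NoBot) : Geq P.C t s := by
  induction h with
  | bot => cases ht
  | refl h => exact .refl h
  | trans _ h₂ ih₁ ih₂ => exact .trans (ih₂ ht) (ih₁ (h₂.noBot hreg ht))
  | mono hlen _ ih =>
    cases ht with
    | con ht =>
      have hih : List.Forall₂ (fun a b : Expr => b.NoBot → Geq P.C b a) _ _ :=
        List.forall₂_iff_length_eq_and_forall_mem_zip.2 ⟨hlen, ih⟩
      exact .con_of_forall₂
        (((List.forall₂_and_left _ _).2 ⟨ht, hih.flip⟩).imp fun _ _ h => h.2 h.1)
  | ax hq =>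
    obtain ⟨p, hp, σ, hσ, ⟨-, hq⟩ | ⟨-, hq⟩⟩ := hq <;> obtain ⟨rfl, rfl⟩ := Prod.mk.inj hq
    · exact .ax ⟨p, hp, σ, hσ, .inr ⟨safeSub_of_noBot_subst hσ ht, rfl⟩⟩
    · exact .ax ⟨p, hp, σ, hσ, .inl ⟨safeSub_of_noBot_subst hσ ht, rfl⟩⟩

theorem geq_fillBot {C : Axioms} {t : Expr} (ht : t.IsTerm) : Geq C t.fillBot t := by
  induction ht with
  | var x => simpa using Geq.refl (.var x)
  | bot => exact .bot (Expr.IsTerm.fillBot .bot)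
  | con _ ih =>
    rw [Expr.fillBot]
    exact .con_of_forall₂ (List.forall₂_map_left_iff.2 (List.forall₂_same.2 ih))

theorem MaxClass.noBot (hreg : RegularAxioms P.C) {V : Env} {t : Expr} (ht : TermOver V t)
    (h : MaxClass P V t) : t.NoBot :=
  have hfill : TermOver V t.fillBot :=
    ⟨ht.1.fillBot, fun x hx => ht.2 x (Expr.occurs_of_occurs_fillBot hx)⟩
  (h _ hfill (geq_fillBot ht.1)).noBot hreg (Expr.noBot_fillBot t)

theorem maxClass_of_noBot (hreg : RegularAxioms P.C) {V : Env} {t : Expr} (ht : t.NoBot) :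
    MaxClass P V t :=
  fun _ _ h => h.symm_of_noBot hreg ht

theorem maxClass_con (hreg : RegularAxioms P.C) {V : Env} {c : ℕ} {ts : List Expr}
    (hts : ∀ t ∈ ts, TermOver V t ∧ MaxClass P V t) : MaxClass P V (.con c ts) :=
  maxClass_of_noBot hreg (.con fun t ht => (hts t ht).2.noBot hreg (hts t ht).1)

end Geq

section GORC

variable {P : Program}

theorem GORC.con_of_forall₂ {c : ℕ} {es ts : List Expr}
    (h : List.Forall₂ (fun e t => GORC P (.red e t)) es ts) :
    GORC P (.red (.con c es) (.con c ts)) :=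
  .dc h.length_eq (List.forall₂_iff_length_eq_and_forall_mem_zip.1 h).2

theorem GORC.omut_of_forall₂ {c : ℕ} {es ts : List Expr} {s t : Expr} (ht : t ≠ .bot)
    (hq : (.con c ts, s) ∈ CInstances P.C)
    (h : List.Forall₂ (fun e t => GORC P (.red e t)) es ts) (hs : GORC P (.red s t)) :
    GORC P (.red (.con c es) t) :=
  .omut ht hq h.length_eq (List.forall₂_iff_length_eq_and_forall_mem_zip.1 h).2 hs

theorem GORC.orule_of_forall₂ {es : List Expr} {ρ : Rule} {t : Expr} (ht : t ≠ .bot)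
    (hρ : ρ ∈ RInstances P) (h : List.Forall₂ (fun e t => GORC P (.red e t)) es ρ.lhs)
    (hconds : ∀ p ∈ ρ.conds, GORC P (.join p.1 p.2)) (hrhs : GORC P (.red ρ.rhs t)) :
    GORC P (.red (.fn ρ.fname es) t) :=
  .orule ht hρ h.length_eq (List.forall₂_iff_length_eq_and_forall_mem_zip.1 h).2 hconds hrhs

theorem GORC.forall₂_of_forall_mem_zip {es ts : List Expr} (hlen : es.length = ts.length)
    (h : ∀ p ∈ es.zip ts, GORC P (.red p.1 p.2)) :
    List.Forall₂ (fun e t => GORC P (.red e t)) es ts :=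
  List.forall₂_iff_length_eq_and_forall_mem_zip.2 ⟨hlen, h⟩

@[elab_as_elim]
theorem GORC.red_induction {motive : Expr → Expr → Prop}
    (bot : ∀ e, motive e .bot)
    (rrefl : ∀ x, motive (.var x) (.var x))
    (dc : ∀ c es ts, List.Forall₂ (fun e t => GORC P (.red e t) ∧ motive e t) es ts →
      motive (.con c es) (.con c ts))
    (omut : ∀ c es ts s t, t ≠ .bot → (.con c ts, s) ∈ CInstances P.C →
      List.Forall₂ (fun e t => GORC P (.red e t) ∧ motive e t) es ts →
      GORC P (.red s t) → motive s t → motive (.con c es) t)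
    (orule : ∀ es ρ t, t ≠ .bot → ρ ∈ RInstances P →
      List.Forall₂ (fun e t => GORC P (.red e t) ∧ motive e t) es ρ.lhs →
      (∀ p ∈ ρ.conds, GORC P (.join p.1 p.2)) →
      GORC P (.red ρ.rhs t) → motive ρ.rhs t → motive (.fn ρ.fname es) t)
    {e t : Expr} (h : GORC P (.red e t)) : motive e t := by
  suffices ∀ st, GORC P st → ∀ e t, st = .red e t → motive e t from this _ h e t rfl
  intro st h
  induction h with
  | bot e => rintro _ _ ⟨⟩; exact bot e
  | rrefl x => rintro _ _ ⟨⟩; exact rrefl x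
  | dc hlen hall ih =>
    rintro _ _ ⟨⟩
    exact dc _ _ _ (List.forall₂_iff_length_eq_and_forall_mem_zip.2
      ⟨hlen, fun p hp => ⟨hall p hp, ih p hp _ _ rfl⟩⟩)
  | omut hne hq hlen hall hs ih ihs =>
    rintro _ _ ⟨⟩
    exact omut _ _ _ _ _ hne hq (List.forall₂_iff_length_eq_and_forall_mem_zip.2
      ⟨hlen, fun p hp => ⟨hall p hp, ih p hp _ _ rfl⟩⟩) hs (ihs _ _ rfl)
  | orule hne hρ hlen hall hconds hrhs ih _ ihrhs =>
    rintro _ _ ⟨⟩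
    exact orule _ _ _ hne hρ (List.forall₂_iff_length_eq_and_forall_mem_zip.2
      ⟨hlen, fun p hp => ⟨hall p hp, ih p hp _ _ rfl⟩⟩) hconds hrhs (ihrhs _ _ rfl)
  | join => rintro _ _ ⟨⟩

theorem GORC.red_refl {t : Expr} (ht : t.IsTerm) : GORC P (.red t t) := by
  induction ht with
  | var x => exact .rrefl x
  | bot => exact .bot _
  | con _ ih => exact .con_of_forall₂ (List.forall₂_same.2 ih)

/-- `OMUT` and `ORULE` hand their target unchanged to a premise, so a derivation of `e → c(ts)`
bottoms out in a `DC` step for `c(ts)`; replacing that step replaces the target. -/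
theorem GORC.retarget {c : ℕ} {ts : List Expr} {t' : Expr} (ht' : t' ≠ .bot)
    (hdc : ∀ es, List.Forall₂ (fun e t => GORC P (.red e t)) es ts →
      GORC P (.red (.con c es) t'))
    {e : Expr} (h : GORC P (.red e (.con c ts))) : GORC P (.red e t') := by
  generalize hu : Expr.con c ts = u at h
  revert hu
  refine GORC.red_induction ?bot ?rrefl ?dc ?omut ?orule h
  case bot => rintro _ ⟨⟩
  case rrefl => rintro _ ⟨⟩
  case dc =>
    rintro c' es ts' hes ⟨⟩
    exact hdc es (hes.imp fun _ _ => And.left)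
  case omut =>
    rintro c' es ts' s t - hq hes - ih rfl
    exact .omut_of_forall₂ ht' hq (hes.imp fun _ _ => And.left) (ih rfl)
  case orule =>
    rintro es ρ t - hρ hes hconds - ih rfl
    exact .orule_of_forall₂ ht' hρ (hes.imp fun _ _ => And.left) hconds (ih rfl)

theorem GORC.red_of_geq_right (hnc : NonCollapsing P.C) {t t' : Expr} (h : Geq P.C t t') :
    ∀ e, GORC P (.red e t) → GORC P (.red e t') := by
  induction h with
  | bot => exact fun e _ => .bot e
  | refl => exact fun _ => id
  | trans _ _ ih₁ ih₂ => exact fun e he => ih₂ e (ih₁ e he)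
  | mono hlen _ ih =>
    have hih : List.Forall₂ (fun a b => ∀ e, GORC P (.red e a) → GORC P (.red e b)) _ _ :=
      List.forall₂_iff_length_eq_and_forall_mem_zip.2 ⟨hlen, ih⟩
    exact fun e he => he.retarget Expr.noConfusion fun es hes =>
      .con_of_forall₂ (hes.comp hih fun _ _ _ h₁ h₂ => h₂ _ h₁)
  | ax hq =>
    obtain ⟨⟨-, c, ts, rfl⟩, ⟨ht', d, ss, rfl⟩⟩ := isTerm_con_of_mem_cInstances hnc hq
    exact fun e he => he.retarget Expr.noConfusion fun es hes =>
      .omut_of_forall₂ Expr.noConfusion hq hes (.red_refl ht')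

theorem GORC.red_of_geq_left (hnc : NonCollapsing P.C) {s' s : Expr} (h : Geq P.C s' s) :
    ∀ u, GORC P (.red s u) → GORC P (.red s' u) := by
  induction h with
  | bot =>
    intro u hu
    cases hu
    exact .bot _
  | refl => exact fun _ => id
  | trans _ _ ih₁ ih₂ => exact fun u hu => ih₁ u (ih₂ u hu)
  | mono hlen _ ih =>
    have hih : List.Forall₂ (fun a b => ∀ u, GORC P (.red b u) → GORC P (.red a u)) _ _ :=
      List.forall₂_iff_length_eq_and_forall_mem_zip.2 ⟨hlen, ih⟩
    intro u hu
    cases hu with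
    | bot => exact .bot _
    | dc hlen' hall =>
      exact .con_of_forall₂ (hih.comp
        (GORC.forall₂_of_forall_mem_zip hlen' hall) fun _ _ _ h₁ h₂ => h₁ _ h₂)
    | omut hne hq hlen' hall hs =>
      exact .omut_of_forall₂ hne hq (hih.comp
        (GORC.forall₂_of_forall_mem_zip hlen' hall) fun _ _ _ h₁ h₂ => h₁ _ h₂) hs
  | ax hq =>
    obtain ⟨⟨hs', c, ts, rfl⟩, -⟩ := isTerm_con_of_mem_cInstances hnc hq
    intro u hu
    by_cases hbot : u = .bot
    · exact hbot ▸ .bot _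
    · cases hs' with
      | con hts =>
        exact .omut_of_forall₂ hbot hq (List.forall₂_same.2 fun t ht => .red_refl (hts t ht)) hu

theorem GORC.red_fn_of_forall₂_geq (hnc : NonCollapsing P.C) {f : ℕ} {ts ss : List Expr} {t : Expr}
    (h : List.Forall₂ (fun t s => Geq P.C s t) ts ss) (ht : GORC P (.red (.fn f ts) t)) :
    GORC P (.red (.fn f ss) t) := by
  cases ht with
  | bot => exact .bot _
  | @orule _ ρ _ hne hρ hlen hall hconds hrhs =>
    exact .orule_of_forall₂ hne hρ (h.flip.comp (GORC.forall₂_of_forall_mem_zip hlen hall)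
      fun _ _ _ h₁ h₂ => red_of_geq_left hnc h₁ _ h₂) hconds hrhs

end GORC

section Typing

variable {Sg : Signature} {V : Env}

theorem hasType_var_iff {x : ℕ} {τ : Ty} : HasType Sg V (.var x) τ ↔ V x = some τ :=
  ⟨fun h => by cases h; assumption, .var⟩

theorem hasType_con_iff {c : ℕ} {es : List Expr} {τ : Ty} :
    HasType Sg V (.con c es) τ ↔ ∃ D η, Sg.dc c = some D ∧ τ = D.res.subst η ∧
      List.Forall₂ (fun e a => HasType Sg V e (a.subst η)) es D.args := by
  constructor
  · rintro (_ | _ | ⟨hD, hlen, hall⟩)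
    exact ⟨_, _, hD, rfl, List.forall₂_iff_length_eq_and_forall_mem_zip.2 ⟨hlen, hall⟩⟩
  · rintro ⟨D, η, hD, rfl, h⟩
    exact .con hD h.length_eq (List.forall₂_iff_length_eq_and_forall_mem_zip.1 h).2

theorem hasType_fn_iff {f : ℕ} {es : List Expr} {τ : Ty} :
    HasType Sg V (.fn f es) τ ↔ ∃ D η, Sg.fs f = some D ∧ τ = D.res.subst η ∧
      List.Forall₂ (fun e a => HasType Sg V e (a.subst η)) es D.args := by
  constructor
  · rintro (_ | _ | _ | ⟨hD, hlen, hall⟩)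
    exact ⟨_, _, hD, rfl, List.forall₂_iff_length_eq_and_forall_mem_zip.2 ⟨hlen, hall⟩⟩
  · rintro ⟨D, η, hD, rfl, h⟩
    exact .fn hD h.length_eq (List.forall₂_iff_length_eq_and_forall_mem_zip.1 h).2

theorem HasType.con_of_forall₂ {c : ℕ} {es ts : List Expr} {τ : Ty}
    (h : List.Forall₂ (fun e t => ∀ τ, HasType Sg V e τ → HasType Sg V t τ) es ts)
    (he : HasType Sg V (.con c es) τ) : HasType Sg V (.con c ts) τ := by
  obtain ⟨D, η, hD, rfl, hes⟩ := hasType_con_iff.1 he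
  exact hasType_con_iff.2 ⟨D, η, hD, rfl, h.flip.comp hes fun _ _ _ h₁ h₂ => h₁ _ h₂⟩

def WellTypedSubstOn (Sg : Signature) (V₀ V : Env) (σ : ℕ → Expr) (θ : ℕ → Ty) (e : Expr) :
    Prop :=
  ∀ x τ, Expr.Occurs x e → V₀ x = some τ → HasType Sg V (σ x) (τ.subst θ)

theorem HasType.subst {V₀ : Env} {σ : ℕ → Expr} {θ : ℕ → Ty} {e : Expr} {τ : Ty}
    (h : HasType Sg V₀ e τ) (hσ : WellTypedSubstOn Sg V₀ V σ θ e) :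
    HasType Sg V (e.subst σ) (τ.subst θ) := by
  induction h with
  | var hx => simpa using hσ _ _ .var hx
  | bot τ => simpa using HasType.bot _
  | con hD hlen _ ih =>
    rw [Expr.subst_con, Ty.subst_subst]
    refine hasType_con_iff.2 ⟨_, _, hD, rfl, List.forall₂_map_left_iff.2 ?_⟩
    refine List.forall₂_iff_length_eq_and_forall_mem_zip.2 ⟨hlen, fun p hp => ?_⟩
    rw [← Ty.subst_subst]
    exact ih p hp fun x τ hx => hσ x τ (.con (List.of_mem_zip hp).1 hx)
  | fn hD hlen _ ih =>
    rw [Expr.subst_fn, Ty.subst_subst]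
    refine hasType_fn_iff.2 ⟨_, _, hD, rfl, List.forall₂_map_left_iff.2 ?_⟩
    refine List.forall₂_iff_length_eq_and_forall_mem_zip.2 ⟨hlen, fun p hp => ?_⟩
    rw [← Ty.subst_subst]
    exact ih p hp fun x τ hx => hσ x τ (.fn (List.of_mem_zip hp).1 hx)

/-- Transparency of the data constructors is what makes this work: the result type of a
constructor determines the instances of its argument types. -/
theorem HasType.wellTypedSubstOn_of_subst {V₀ : Env} {σ : ℕ → Expr} {θ : ℕ → Ty} {t : Expr}
    (ht : t.IsTerm) {τ : Ty} (h₀ : HasType Sg V₀ t τ) (h : HasType Sg V (t.subst σ) (τ.subst θ)) :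
    WellTypedSubstOn Sg V₀ V σ θ t := by
  induction ht generalizing τ with
  | var y =>
    rintro x τx ⟨⟩ hVx
    obtain rfl : τ = τx := Option.some.inj ((hasType_var_iff.1 h₀).symm.trans hVx)
    simpa using h
  | bot => rintro x _ ⟨⟩
  | @con c us _ ih =>
    obtain ⟨D, η, hD, rfl, hus₀⟩ := hasType_con_iff.1 h₀
    rw [Expr.subst_con, Ty.subst_subst] at h
    obtain ⟨D', η', hD', hres, hus⟩ := hasType_con_iff.1 h
    obtain rfl : D = D' := Option.some.inj (hD.symm.trans hD')
    have hargs : ∀ a ∈ D.args, a.subst η' = (a.subst η).subst θ := fun a ha => by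
      rw [Ty.subst_subst]; exact (Sg.dc_trans c D hD).subst_args_eq hres.symm ha
    intro x τx hx hVx
    obtain ⟨u, hu, hxu⟩ : ∃ u ∈ us, Expr.Occurs x u := by cases hx; exact ⟨_, ‹_›, ‹_›⟩
    obtain ⟨a, ha, hu₀, huσ⟩ :=
      (hus₀.mp (fun _ _ => And.intro) (List.forall₂_map_left_iff.1 hus)).exists_of_mem_left hu
    exact ih _ hu hu₀ (hargs a ha ▸ huσ) x τx hxu hVx

theorem WellTypedRule.hasType_rhs_subst {ρ : Rule} (hwt : WellTypedRule Sg ρ)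
    (hreg : RegularRule ρ) (hlhs : ∀ t ∈ ρ.lhs, t.IsTerm) {D : Decl}
    (hD : Sg.fs ρ.fname = some D) {σ : ℕ → Expr} {θ : ℕ → Ty}
    (h : List.Forall₂ (fun t a => HasType Sg V (t.subst σ) (a.subst θ)) ρ.lhs D.args) :
    HasType Sg V (ρ.rhs.subst σ) (D.res.subst θ) := by
  obtain ⟨D', hD', hlen, V₀, hlhs₀, hrhs₀, -⟩ := hwt
  obtain rfl : D' = D := Option.some.inj (hD'.symm.trans hD)
  have h₀ : List.Forall₂ (fun t a => HasType Sg V₀ t a) ρ.lhs D'.args :=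
    List.forall₂_iff_length_eq_and_forall_mem_zip.2 ⟨hlen, hlhs₀⟩
  refine hrhs₀.subst fun x τ hx hVx => ?_
  obtain ⟨t, ht, hxt⟩ := hreg x hx
  obtain ⟨a, -, ht₀, htσ⟩ := (h₀.mp (fun _ _ => And.intro) h).exists_of_mem_left ht
  exact HasType.wellTypedSubstOn_of_subst (hlhs t ht) ht₀ (by simpa using htσ) x τ hxt hVx

/-- Every type of an instance of `c(ts)` is an instance of `τ₀`, because `τ₀` is a variant of
the declared result type of `c`. -/
theorem hasType_subst_of_common_principal_type {V₀ : Env} {c : ℕ} {ts : List Expr} {b : Expr}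
    {D : Decl} {τs : List Ty} {τ₀ τ : Ty} {σ : ℕ → Expr} (hD : Sg.dc c = some D)
    (hvar : IsVariant D ⟨τs, τ₀⟩) (hts : (Expr.con c ts).IsTerm)
    (ha₀ : HasType Sg V₀ (.con c ts) τ₀) (hb₀ : HasType Sg V₀ b τ₀)
    (hocc : ∀ x, Expr.Occurs x b → Expr.Occurs x (.con c ts))
    (h : HasType Sg V ((Expr.con c ts).subst σ) τ) : HasType Sg V (b.subst σ) τ := by
  obtain ⟨D', η, hD', rfl, -⟩ := hasType_con_iff.1 (Expr.subst_con .. ▸ h)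
  obtain rfl : D = D' := Option.some.inj (hD.symm.trans hD')
  obtain ⟨θ, hθ⟩ := hvar.exists_subst_res η
  rw [hθ] at h ⊢
  exact hb₀.subst fun x τx hx => ha₀.wellTypedSubstOn_of_subst hts h x τx (hocc x hx)

theorem HasType.of_mem_cInstances {P : Program} (hreg : RegularAxioms P.C)
    (hwt : ∀ p ∈ P.C, WellTypedAxiom Sg p) {s t : Expr} (hq : (s, t) ∈ CInstances P.C) {τ : Ty}
    (hs : HasType Sg V s τ) : HasType Sg V t τ := by
  obtain ⟨⟨l, r⟩, hp, σ, -, hq⟩ := hq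
  obtain ⟨c, ts, d, ss, τs, τs', τ₀, rfl, rfl, ⟨Dc, hDc, hvc⟩, ⟨Dd, hDd, hvd⟩, V₀, hl₀, hr₀⟩ :=
    hwt _ hp
  have hterm := P.wfC.2 _ hp
  rcases hq with ⟨-, hq⟩ | ⟨-, hq⟩ <;> obtain ⟨rfl, rfl⟩ := Prod.mk.inj hq
  · exact hasType_subst_of_common_principal_type hDc hvc hterm.1.1 hl₀ hr₀
      (fun x => (hreg _ hp x).2) hs
  · exact hasType_subst_of_common_principal_type hDd hvd hterm.2.1 hr₀ hl₀
      (fun x => (hreg _ hp x).1) hs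

variable {P : Program}

theorem Geq.hasType (hreg : RegularAxioms P.C) (hwt : ∀ p ∈ P.C, WellTypedAxiom Sg p)
    {s t : Expr} (h : Geq P.C s t) : ∀ τ, HasType Sg V s τ → HasType Sg V t τ := by
  induction h with
  | bot => exact fun τ _ => .bot τ
  | refl => exact fun _ => id
  | trans _ _ ih₁ ih₂ => exact fun τ hτ => ih₂ τ (ih₁ τ hτ)
  | mono hlen _ ih =>
    exact fun τ hτ => hτ.con_of_forall₂ (List.forall₂_iff_length_eq_and_forall_mem_zip.2 ⟨hlen, ih⟩)
  | ax hq => exact fun τ => HasType.of_mem_cInstances hreg hwt hq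

theorem GORC.hasType (hreg : RegularAxioms P.C) (hwt : ∀ p ∈ P.C, WellTypedAxiom Sg p)
    (hR : ∀ ρ ∈ P.R, RegularRule ρ ∧ WellTypedRule Sg ρ) {e t : Expr} (h : GORC P (.red e t)) :
    ∀ τ, HasType Sg V e τ → HasType Sg V t τ := by
  refine GORC.red_induction ?bot ?rrefl ?dc ?omut ?orule h
  case bot => exact fun _ τ _ => .bot τ
  case rrefl => exact fun _ _ => id
  case dc => exact fun _ _ _ hes τ hτ => hτ.con_of_forall₂ (hes.imp fun _ _ => And.right)
  case omut =>
    intro _ _ _ _ _ _ hq hes _ ih τ hτ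
    exact ih τ (.of_mem_cInstances hreg hwt hq (hτ.con_of_forall₂ (hes.imp fun _ _ => And.right)))
  case orule =>
    rintro es _ t - ⟨ρ, hρ, σ, -, rfl⟩ hes - - ih τ hτ
    obtain ⟨D, θ, hD, rfl, hesD⟩ := hasType_fn_iff.1 hτ
    have hlhs := hes.flip.comp hesD fun _ _ _ h₁ h₂ => h₁.2 _ h₂
    exact ih _ ((hR ρ hρ).2.hasType_rhs_subst (hR ρ hρ).1
      (fun t ht => ((P.wfR ρ hρ).2.1 t ht).1) hD (List.forall₂_map_left_iff.1 hlhs))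

end Typing

/-- Theorem 5.5: for a program `P` whose set `C` of equational axioms is
strongly regular and well-typed, the term model `M_P(V)` is a PT-algebra,
i.e. all its components are well defined on `≈_C`-classes and satisfy the
PT-algebra requirements; moreover, if all rules of `P` are regular and
well-typed, then `M_P(V)` is a well-typed PT-algebra, i.e. its operations
respect the instances of the declared principal types. -/
theorem term_model_is_pt_algebra (Sg : Signature) (P : Program) (V : Env)
    (hsr : StronglyRegular P.C) (hwt : ∀ p ∈ P.C, WellTypedAxiom Sg p) :
    -- (1) the data universe Term_{Σ⊥}(X)/≈_C is a poset with bottom [⊥]: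
    ((∀ t, TermOver V t → Geq P.C t t) ∧
     (∀ t t' t'' : Expr, Geq P.C t t' → Geq P.C t' t'' → Geq P.C t t'') ∧
     (∀ t, TermOver V t → Geq P.C t Expr.bot) ∧
     -- (2) the type extensions are well defined on classes and are cones:
     (∀ (τ : Ty) (s t : Expr), TermOver V s → TermOver V t → EqC P.C s t →
        (HasType Sg V s τ ↔ HasType Sg V t τ)) ∧
     (∀ τ : Ty, HasType Sg V Expr.bot τ) ∧
     (∀ (τ : Ty) (s t : Expr), TermOver V s → TermOver V t →
        HasType Sg V s τ → Geq P.C s t → HasType Sg V t τ) ∧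
     -- (4) the constructor operations are well defined and monotonic …
     (∀ (c : ℕ) (ts ss : List Expr), ts.length = ss.length →
        (∀ p ∈ ts.zip ss, Geq P.C p.1 p.2) →
        Geq P.C (Expr.con c ts) (Expr.con c ss)) ∧
     -- … and preserve maximal (totally defined) elements:
     (∀ (c : ℕ) (ts : List Expr), (∀ t ∈ ts, TermOver V t ∧ MaxClass P V t) →
        MaxClass P V (Expr.con c ts)) ∧
     -- (5) the function operations are cone-valued, well defined, monotonic:
     (∀ (f : ℕ) (ts : List Expr), GORC P (Stm.red (Expr.fn f ts) Expr.bot)) ∧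
     (∀ (f : ℕ) (ts : List Expr) (t t' : Expr),
        GORC P (Stm.red (Expr.fn f ts) t) → Geq P.C t t' →
        GORC P (Stm.red (Expr.fn f ts) t')) ∧
     (∀ (f : ℕ) (ts ss : List Expr) (t : Expr), ts.length = ss.length →
        (∀ p ∈ ts.zip ss, Geq P.C p.2 p.1) →
        GORC P (Stm.red (Expr.fn f ts) t) → GORC P (Stm.red (Expr.fn f ss) t))) ∧
    -- if moreover all rules are regular and well-typed, M_P(V) is well-typed:
    ((∀ ρ ∈ P.R, RegularRule ρ ∧ WellTypedRule Sg ρ) →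
      (∀ (c : ℕ) (D : Decl) (σt : ℕ → Ty) (ts : List Expr),
         Sg.dc c = some D → ts.length = D.args.length →
         (∀ p ∈ ts.zip D.args, HasType Sg V p.1 (Ty.subst σt p.2)) →
         HasType Sg V (Expr.con c ts) (Ty.subst σt D.res)) ∧
      (∀ (f : ℕ) (D : Decl) (σt : ℕ → Ty) (ts : List Expr) (t : Expr),
         Sg.fs f = some D → ts.length = D.args.length →
         (∀ p ∈ ts.zip D.args, HasType Sg V p.1 (Ty.subst σt p.2)) →
         GORC P (Stm.red (Expr.fn f ts) t) →
         HasType Sg V t (Ty.subst σt D.res))) := by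
  obtain ⟨hreg, hnc⟩ := hsr
  refine ⟨⟨fun _ ht => .refl ht.1, fun _ _ _ => .trans, fun _ ht => .bot ht.1,
    fun τ _ _ _ _ hst => ⟨hst.1.hasType hreg hwt τ, hst.2.hasType hreg hwt τ⟩, .bot,
    fun τ _ _ _ _ hs hst => hst.hasType hreg hwt τ hs, fun _ _ _ => .mono,
    fun _ _ => maxClass_con hreg, fun _ _ => .bot _,
    fun _ _ _ _ ht htt' => GORC.red_of_geq_right hnc htt' _ ht,
    fun _ _ _ _ hlen hall => GORC.red_fn_of_forall₂_geq hnc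
      (List.forall₂_iff_length_eq_and_forall_mem_zip.2 ⟨hlen, hall⟩)⟩,
    fun hR => ⟨fun _ _ _ _ hD hlen hall => .con hD hlen hall,
      fun _ _ _ _ _ hD hlen hall ht => ht.hasType hreg hwt hR _ (.fn hD hlen hall)⟩⟩

end ACRWL
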